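/- The Planar Laplace Mechanism satisfies ε-geo-indistinguishability: for any x, x', z ∈ ℝ², the ratio of densities D_ε(x)(z)/D_ε(x')(z) is at most e^{ε·d(x,x')}. -/

import Mathlib

open Real

theorem exp_neg_mul_dist_div_exp_neg_mul_dist_le {α : Type*} [PseudoMetricSpace α] {ε : ℝ}
    (hε : 0 ≤ ε) (x x' z : α) :
    exp (-ε * dist x z) / exp (-ε * dist x' z) ≤ exp (ε * dist x x') := by
  have h_triangle : dist x' z - dist x z ≤ dist x x' := by
    linarith [dist_triangle x' x z, dist_comm x x']
  rw [← exp_sub, exp_le_exp]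
  calc -ε * dist x z - -ε * dist x' z = ε * (dist x' z - dist x z) := by ring
    _ ≤ ε * dist x x' := mul_le_mul_of_nonneg_left h_triangle hε

/-- The Planar Laplace Mechanism satisfies ε-geo-indistinguishability:
the ratio of densities `D_ε(x)(z)/D_ε(x')(z)` is at most `exp(ε·d(x,x'))`. -/
theorem planar_laplace_geo_indistinguishability
    (ε : ℝ) (hε : 0 < ε) (x x' z : EuclideanSpace ℝ (Fin 2)) :
    ((ε ^ 2 / (2 * Real.pi)) * Real.exp (-ε * dist x z)) /
      ((ε ^ 2 / (2 * Real.pi)) * Real.exp (-ε * dist x' z))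
      ≤ Real.exp (ε * dist x x') := by
  have h_norm_ne_zero : ε ^ 2 / (2 * Real.pi) ≠ 0 := by positivity
  rw [mul_div_mul_left _ _ h_norm_ne_zero]
  exact exp_neg_mul_dist_div_exp_neg_mul_dist_le hε.le x x' z
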